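/- arXiv:1706.03092 — 3 statements merged into one kernel-verified Lean document; each statement's English description precedes it below -/
import Mathlib

section
/- There is a bijection between (isomorphism classes of) bipartite posets on n points containing a full support point and (isomorphism classes of) bipartite posets on at most n − 1 points. -/
/-- A bipartite poset on `Fin n`: a strict partial order of height at most one
(no chain x ≺ y ≺ z). -/
structure BipPoset (n : ℕ) where
  lt : Fin n → Fin n → Prop
  irrefl : ∀ a, ¬ lt a a
  trans : ∀ a b c, lt a b → lt b c → lt a c
  height_le_one : ∀ a b c, ¬ (lt a b ∧ lt b c)

/-- An element has height 1 if some element lies strictly below it. -/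
def HeightOne {n : ℕ} (P : BipPoset n) (y : Fin n) : Prop := ∃ u, P.lt u y

/-- A full support point: a height-0 element comparable to every height-1 element. -/
def FullSupport {n : ℕ} (P : BipPoset n) (x : Fin n) : Prop :=
  (∀ u, ¬ P.lt u x) ∧ ∀ y, HeightOne P y → P.lt x y

/-- Isomorphism of bipartite posets on `Fin n`. -/
def BipPosetRel (n : ℕ) (P Q : BipPoset n) : Prop :=
  ∃ e : Equiv.Perm (Fin n), ∀ a b, P.lt a b ↔ Q.lt (e a) (e b)

/-- Isomorphism of unbalanced bipartite posets (those with a full support point)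
on `Fin n`. -/
def UBipPosetRel (n : ℕ)
    (P Q : {P : BipPoset n // ∃ x, FullSupport P x}) : Prop :=
  ∃ e : Equiv.Perm (Fin n), ∀ a b, P.1.lt a b ↔ Q.1.lt (e a) (e b)

/-- Isomorphism of bipartite posets on ground sets of size `t ≤ n − 1`. -/
def SmallBipPosetRel (n : ℕ)
    (P Q : Σ t : Fin n, BipPoset t.val) : Prop :=
  ∃ e : Fin P.1.val ≃ Fin Q.1.val, ∀ a b, P.2.lt a b ↔ Q.2.lt (e a) (e b)

namespace PosetCompilation

variable {n : ℕ}

/-- The underlying relation of the extension of a small poset `Q` on `Fin t` to `Fin n`: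
elements `< t` copy `Q`, element `t` is a new full support point, elements `> t`
are pendant points lying only above the new point. -/
def extLt {t : ℕ} (Q : BipPoset t) (a b : Fin n) : Prop :=
  (∃ (ha : a.val < t) (hb : b.val < t), Q.lt ⟨a.val, ha⟩ ⟨b.val, hb⟩) ∨
    (a.val = t ∧ (t < b.val ∨ ∃ hb : b.val < t, HeightOne Q ⟨b.val, hb⟩))

lemma extLt_noChain {t : ℕ} (Q : BipPoset t) (a b c : Fin n) :
    ¬ ((extLt Q a b) ∧ (extLt Q b c)) := by
  rintro ⟨h1, h2⟩
  rcases h2 with ⟨hb, hc, h2⟩ | ⟨hb, -⟩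
  · rcases h1 with ⟨ha, hb', h1⟩ | ⟨ha, hb' | ⟨hb', h1⟩⟩
    · exact Q.height_le_one _ _ _ ⟨h1, h2⟩
    · omega
    · obtain ⟨u, hu⟩ := h1
      exact Q.height_le_one u _ _ ⟨hu, h2⟩
  · rcases h1 with ⟨ha, hb', h1⟩ | ⟨ha, hb' | ⟨hb', h1⟩⟩ <;> omega

def ext (n t : ℕ) (Q : BipPoset t) : BipPoset n where
  lt := extLt Q
  irrefl := by
    rintro a (⟨ha, hb, h⟩ | ⟨ha, hb | ⟨hb, -⟩⟩)
    · exact Q.irrefl _ h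
    · omega
    · omega
  trans := fun a b c h1 h2 => absurd ⟨h1, h2⟩ (extLt_noChain Q a b c)
  height_le_one := fun a b c => extLt_noChain Q a b c

lemma extLt_low {t : ℕ} (Q : BipPoset t) {a b : Fin n} (ha : a.val < t) (hb : b.val < t) :
    extLt Q a b ↔ Q.lt ⟨a.val, ha⟩ ⟨b.val, hb⟩ := by
  constructor
  · rintro (⟨_, _, h⟩ | ⟨h, -⟩)
    · exact h
    · omega
  · intro h; exact Or.inl ⟨ha, hb, h⟩

lemma fullSupport_ext {t : ℕ} (ht : t < n) (Q : BipPoset t) :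
    FullSupport (ext n t Q) ⟨t, ht⟩ := by
  constructor
  · rintro u (⟨-, hb, -⟩ | ⟨-, hb | ⟨hb, -⟩⟩)
    · exact absurd hb (lt_irrefl t)
    · exact absurd hb (lt_irrefl t)
    · exact absurd hb (lt_irrefl t)
  · rintro y ⟨u, hu⟩
    rcases hu with ⟨ha, hy, h⟩ | ⟨ha, hy⟩
    · exact Or.inr ⟨rfl, Or.inr ⟨hy, ⟨_, h⟩⟩⟩
    · exact Or.inr ⟨rfl, hy⟩

lemma heightOne_congr {t s : ℕ} {Q : BipPoset t} {R : BipPoset s} (e : Fin t ≃ Fin s)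
    (he : ∀ a b, Q.lt a b ↔ R.lt (e a) (e b)) (b : Fin t) :
    HeightOne Q b ↔ HeightOne R (e b) := by
  constructor
  · rintro ⟨u, hu⟩; exact ⟨e u, (he u b).1 hu⟩
  · rintro ⟨v, hv⟩
    refine ⟨e.symm v, (he _ _).2 ?_⟩
    simpa using hv

/-- Pendant point w.r.t. `x`: strictly above `x` and above nothing else. -/
def Pend (P : BipPoset n) (x a : Fin n) : Prop :=
  P.lt x a ∧ ∀ u, P.lt u a → u = x

def Kept (P : BipPoset n) (x a : Fin n) : Prop := a ≠ x ∧ ¬ Pend P x a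

open Classical in
noncomputable def keptSet (P : BipPoset n) (x : Fin n) : Finset (Fin n) :=
  Finset.univ.filter (fun a => Kept P x a)

lemma mem_keptSet {P : BipPoset n} {x a : Fin n} : a ∈ keptSet P x ↔ Kept P x a := by
  simp [keptSet]

lemma pend_congr {P P' : BipPoset n} (e : Equiv.Perm (Fin n))
    (h : ∀ a b, P.lt a b ↔ P'.lt (e a) (e b)) (x a : Fin n) :
    Pend P x a ↔ Pend P' (e x) (e a) := by
  constructor
  · rintro ⟨h1, h2⟩
    refine ⟨(h x a).1 h1, fun v hv => ?_⟩
    have hv' : P.lt (e.symm v) a := (h _ _).2 (by simpa using hv)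
    have h3 := h2 _ hv'
    rw [← h3]; simp
  · rintro ⟨h1, h2⟩
    refine ⟨(h x a).2 h1, fun u hu => ?_⟩
    exact e.injective (h2 (e u) ((h u a).1 hu))

lemma kept_congr {P P' : BipPoset n} (e : Equiv.Perm (Fin n))
    (h : ∀ a b, P.lt a b ↔ P'.lt (e a) (e b)) (x a : Fin n) :
    Kept P x a ↔ Kept P' (e x) (e a) :=
  and_congr (e.injective.ne_iff).symm (not_congr (pend_congr e h x a))

lemma keptSet_congr {P P' : BipPoset n} (e : Equiv.Perm (Fin n))
    (h : ∀ a b, P.lt a b ↔ P'.lt (e a) (e b)) (x : Fin n) :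
    keptSet P' (e x) = (keptSet P x).image e := by
  ext b
  simp only [Finset.mem_image, mem_keptSet]
  constructor
  · intro hb
    refine ⟨e.symm b, ?_, by simp⟩
    rw [kept_congr e h x (e.symm b)]
    simpa using hb
  · rintro ⟨a, ha, rfl⟩
    exact (kept_congr e h x a).1 ha

lemma fullSupport_congr {P P' : BipPoset n} (e : Equiv.Perm (Fin n))
    (h : ∀ a b, P.lt a b ↔ P'.lt (e a) (e b)) {x : Fin n} (hx : FullSupport P x) :
    FullSupport P' (e x) := by
  constructor
  · intro v hv
    exact hx.1 (e.symm v) ((h _ _).2 (by simpa using hv))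
  · rintro y ⟨v, hv⟩
    have h1 : P.lt x (e.symm y) := hx.2 _ ⟨e.symm v, (h _ _).2 (by simpa using hv)⟩
    have h2 := (h _ _).1 h1
    simpa using h2

lemma keptSet_card_fullSupport (P : BipPoset n) {x₁ x₂ : Fin n}
    (h1 : FullSupport P x₁) (h2 : FullSupport P x₂) :
    (keptSet P x₁).card = (keptSet P x₂).card := by
  classical
  rcases eq_or_ne x₁ x₂ with rfl | hne
  · rfl
  · have key : ∀ (x y : Fin n), FullSupport P x → FullSupport P y → x ≠ y →
        keptSet P x = Finset.univ.erase x := by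
      intro x y hx hy hxy
      ext a
      rw [mem_keptSet]
      simp only [Finset.mem_erase, Finset.mem_univ, and_true]
      constructor
      · exact fun h => h.1
      · intro ha
        refine ⟨ha, ?_⟩
        rintro ⟨hlt, hall⟩
        have hya : P.lt y a := hy.2 a ⟨x, hlt⟩
        exact hxy ((hall y hya).symm)
    rw [key x₁ x₂ h1 h2 hne, key x₂ x₁ h2 h1 hne.symm,
      Finset.card_erase_of_mem (Finset.mem_univ _),
      Finset.card_erase_of_mem (Finset.mem_univ _)]

lemma keptSet_ext {t : ℕ} (ht : t < n) (Q : BipPoset t) :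
    keptSet (ext n t Q) ⟨t, ht⟩ = Finset.univ.filter (fun a => a.val < t) := by
  classical
  ext a
  rw [mem_keptSet]
  simp only [Finset.mem_filter, Finset.mem_univ, true_and]
  constructor
  · rintro ⟨hne, hnp⟩
    rcases lt_trichotomy a.val t with h | h | h
    · exact h
    · exact absurd (Fin.ext h) hne
    · exfalso; apply hnp
      refine ⟨Or.inr ⟨rfl, Or.inl h⟩, ?_⟩
      rintro u (⟨-, hb, -⟩ | ⟨hu, -⟩)
      · omega
      · exact Fin.ext hu
  · intro h
    refine ⟨fun hax => ?_, ?_⟩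
    · rw [hax] at h; exact lt_irrefl t h
    · rintro ⟨hlt, hall⟩
      rcases hlt with ⟨ha, -, -⟩ | ⟨-, h2 | ⟨ha2, hone⟩⟩
      · exact absurd ha (lt_irrefl t)
      · omega
      · obtain ⟨u, hu⟩ := hone
        have h3 := hall ⟨u.val, u.isLt.trans ht⟩ (Or.inl ⟨u.isLt, ha2, hu⟩)
        have h4 : u.val = t := congrArg Fin.val h3
        exact absurd h4 (Nat.ne_of_lt u.isLt)

lemma keptSet_ext_card {t : ℕ} (ht : t < n) (Q : BipPoset t) :
    (keptSet (ext n t Q) ⟨t, ht⟩).card = t := by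
  classical
  rw [keptSet_ext ht Q]
  have himg : Finset.univ.filter (fun a : Fin n => a.val < t) =
      Finset.univ.image (fun i : Fin t => (⟨i.val, i.isLt.trans ht⟩ : Fin n)) := by
    ext a
    simp only [Finset.mem_filter, Finset.mem_univ, true_and, Finset.mem_image]
    constructor
    · intro h; exact ⟨⟨a.val, h⟩, by simp⟩

    · rintro ⟨i, -, rfl⟩; exact i.isLt
  rw [himg, Finset.card_image_of_injective _ ?_, Finset.card_univ, Fintype.card_fin]
  intro i j hij
  have h1 : i.val = j.val := by simpa using hij
  exact Fin.ext h1

lemma swap_auto (P : BipPoset n) {x y : Fin n} (hx : FullSupport P x) (hy : FullSupport P y)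
    (a b : Fin n) : P.lt a b ↔ P.lt (Equiv.swap x y a) (Equiv.swap x y b) := by
  have key : ∀ a b, P.lt a b → P.lt (Equiv.swap x y a) (Equiv.swap x y b) := by
    intro a b hab
    have hbx : b ≠ x := fun h => hx.1 a (h ▸ hab)
    have hby : b ≠ y := fun h => hy.1 a (h ▸ hab)
    rw [Equiv.swap_apply_of_ne_of_ne hbx hby]
    rcases eq_or_ne a x with rfl | hax
    · rw [Equiv.swap_apply_left]
      exact hy.2 b ⟨a, hab⟩
    rcases eq_or_ne a y with rfl | hay
    · rw [Equiv.swap_apply_right]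
      exact hx.2 b ⟨a, hab⟩
    · rw [Equiv.swap_apply_of_ne_of_ne hax hay]
      exact hab
  constructor
  · exact key a b
  · intro h
    have h2 := key _ _ h
    simpa [Equiv.swap_apply_self] using h2

lemma ext_congr {t s : ℕ} (ht : t < n) (hs : s < n) (Q : BipPoset t) (R : BipPoset s)
    (e : Fin t ≃ Fin s) (he : ∀ a b, Q.lt a b ↔ R.lt (e a) (e b)) :
    ∃ E : Equiv.Perm (Fin n), ∀ a b, (ext n t Q).lt a b ↔ (ext n s R).lt (E a) (E b) := by
  have hts : t = s := by
    have h0 := Fintype.card_congr e; simpa using h0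
  subst hts
  set f : Fin n → Fin n := fun a =>
    if h : a.val < t then ⟨(e ⟨a.val, h⟩).val, (e ⟨a.val, h⟩).isLt.trans ht⟩ else a with hfdef
  have hf1 : ∀ (a : Fin n) (h : a.val < t),
      f a = ⟨(e ⟨a.val, h⟩).val, (e ⟨a.val, h⟩).isLt.trans ht⟩ := fun a h => dif_pos h
  have hf2 : ∀ (a : Fin n), ¬ a.val < t → f a = a := fun a h => dif_neg h
  have hinj : Function.Injective f := by
    intro a b hab
    by_cases ha : a.val < t <;> by_cases hb : b.val < t
    · rw [hf1 a ha, hf1 b hb] at hab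
      have h1 : (e ⟨a.val, ha⟩).val = (e ⟨b.val, hb⟩).val := by simpa using hab
      have h2 := e.injective (Fin.ext h1)
      have h3 : a.val = b.val := by simpa using h2
      exact Fin.ext h3
    · rw [hf1 a ha, hf2 b hb] at hab
      have h1 : (e ⟨a.val, ha⟩).val = b.val := congrArg Fin.val hab
      have := (e ⟨a.val, ha⟩).isLt
      omega
    · rw [hf2 a ha, hf1 b hb] at hab
      have h1 : a.val = (e ⟨b.val, hb⟩).val := congrArg Fin.val hab
      have := (e ⟨b.val, hb⟩).isLt
      omega
    · rw [hf2 a ha, hf2 b hb] at hab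
      exact hab
  refine ⟨Equiv.ofBijective f (Finite.injective_iff_bijective.mp hinj), ?_⟩
  intro a b
  show extLt Q a b ↔ extLt R (f a) (f b)
  constructor
  · rintro (⟨ha, hb, h⟩ | ⟨ha, hb | ⟨hb, hone⟩⟩)
    · rw [hf1 a ha, hf1 b hb]
      exact Or.inl ⟨(e ⟨a.val, ha⟩).isLt, (e ⟨b.val, hb⟩).isLt, (he _ _).1 h⟩
    · rw [hf2 a (by omega), hf2 b (by omega)]
      exact Or.inr ⟨ha, Or.inl hb⟩
    · rw [hf2 a (by omega), hf1 b hb]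
      exact Or.inr ⟨ha, Or.inr ⟨(e ⟨b.val, hb⟩).isLt, (heightOne_congr e he _).1 hone⟩⟩
  · intro h
    by_cases ha : a.val < t
    · rw [hf1 a ha] at h
      by_cases hb : b.val < t
      · rw [hf1 b hb] at h
        rcases h with ⟨ha2, hb2, hQR⟩ | ⟨ha', -⟩
        · exact Or.inl ⟨ha, hb, (he _ _).2 hQR⟩
        · exact absurd ha' (Nat.ne_of_lt (e ⟨a.val, ha⟩).isLt)
      · rw [hf2 b hb] at h
        rcases h with ⟨-, hb', -⟩ | ⟨ha', -⟩
        · exact absurd hb' hb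
        · exact absurd ha' (Nat.ne_of_lt (e ⟨a.val, ha⟩).isLt)
    · rw [hf2 a ha] at h
      by_cases hb : b.val < t
      · rw [hf1 b hb] at h
        rcases h with ⟨ha', -, -⟩ | ⟨ha', hb' | ⟨hb'', hone⟩⟩
        · exact absurd ha' ha
        · exact absurd hb' (Nat.not_lt.mpr (le_of_lt (e ⟨b.val, hb⟩).isLt))
        · exact Or.inr ⟨ha', Or.inr ⟨hb, (heightOne_congr e he ⟨b.val, hb⟩).2 hone⟩⟩
      · rw [hf2 b hb] at h
        rcases h with ⟨ha', -, -⟩ | ⟨ha', hb' | ⟨hb'', -⟩⟩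
        · exact absurd ha' ha
        · exact Or.inr ⟨ha', Or.inl hb'⟩
        · exact absurd hb'' hb

lemma extraction (P : BipPoset n) (x : Fin n) (hx : FullSupport P x) :
    ∃ (t : ℕ) (ht : t < n) (Q : BipPoset t) (E : Equiv.Perm (Fin n)),
      ∀ a b, (ext n t Q).lt a b ↔ P.lt (E a) (E b) := by
  classical
  set K : Finset (Fin n) := keptSet P x with hK
  set D : Finset (Fin n) := Finset.univ.filter (fun a => Pend P x a) with hD
  have fact_kept : ∀ c ∈ K, Kept P x c := fun c hc => mem_keptSet.mp hc
  have fact_pend : ∀ c ∈ D, Pend P x c := by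
    intro c hc
    rw [hD, Finset.mem_filter] at hc
    exact hc.2
  have hxD : x ∉ D := by
    intro hc
    exact P.irrefl x (fact_pend x hc).1
  have hcompl : Kᶜ = insert x D := by
    ext a
    simp only [Finset.mem_compl, hK, mem_keptSet, Finset.mem_insert, hD, Finset.mem_filter,
      Finset.mem_univ, true_and, Kept]
    constructor
    · intro h
      by_cases hax : a = x
      · exact Or.inl hax
      · right; by_contra hp; exact h ⟨hax, hp⟩
    · rintro (rfl | hp) ⟨hne, hnp⟩
      · exact hne rfl
      · exact hnp hp
  have hcard : K.card + 1 + D.card = n := by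
    have h1 := Finset.card_add_card_compl K
    rw [hcompl, Finset.card_insert_of_notMem hxD] at h1
    simp only [Fintype.card_fin] at h1
    omega
  set eK := K.equivFin.symm with heK
  set eD := D.equivFin.symm with heD
  set φ : Fin n → Fin n := fun a =>
    if h : a.val < K.card then ((eK ⟨a.val, h⟩ : {c // c ∈ K}) : Fin n)
    else if h2 : a.val = K.card then x
    else ((eD ⟨a.val - (K.card + 1), by have := a.isLt; omega⟩ : {c // c ∈ D}) : Fin n)
    with hφdef
  have hφ1 : ∀ (a : Fin n) (h : a.val < K.card),
      φ a = ((eK ⟨a.val, h⟩ : {c // c ∈ K}) : Fin n) := fun a h => dif_pos h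
  have hφ2 : ∀ (a : Fin n), a.val = K.card → φ a = x := by
    intro a h
    have h1 : ¬ a.val < K.card := by omega
    exact (dif_neg h1).trans (dif_pos h)
  have hφ3' : ∀ (a : Fin n) (h1 : ¬ a.val < K.card) (h2 : a.val ≠ K.card)
      (hpf : a.val - (K.card + 1) < D.card),
      φ a = ((eD ⟨a.val - (K.card + 1), hpf⟩ : {c // c ∈ D}) : Fin n) := by
    intro a h1 h2 hpf
    exact (dif_neg h1).trans (dif_neg h2)
  have hφ3 : ∀ (a : Fin n), ¬ a.val < K.card → a.val ≠ K.card → φ a ∈ D := by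
    intro a h1 h2
    have hpf : a.val - (K.card + 1) < D.card := by have := a.isLt; omega
    rw [hφ3' a h1 h2 hpf]
    exact (eD ⟨a.val - (K.card + 1), hpf⟩).2
  have hinj : Function.Injective φ := by
    intro a b hab
    by_cases ha : a.val < K.card <;> by_cases hb : b.val < K.card
    · rw [hφ1 a ha, hφ1 b hb] at hab
      have h1 : eK ⟨a.val, ha⟩ = eK ⟨b.val, hb⟩ := Subtype.ext hab
      have h2 := eK.injective h1
      have h3 : a.val = b.val := by simpa using h2
      exact Fin.ext h3
    · exfalso
      by_cases hb2 : b.val = K.card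
      · rw [hφ1 a ha, hφ2 b hb2] at hab
        exact (fact_kept _ (eK ⟨a.val, ha⟩).2).1 hab
      · have hbD := hφ3 b hb hb2
        rw [hφ1 a ha] at hab
        have h1 : φ b ∈ K := hab ▸ (eK ⟨a.val, ha⟩).2
        exact (fact_kept _ h1).2 (fact_pend _ hbD)
    · exfalso
      by_cases ha2 : a.val = K.card
      · rw [hφ1 b hb, hφ2 a ha2] at hab
        exact (fact_kept _ (eK ⟨b.val, hb⟩).2).1 hab.symm
      · have haD := hφ3 a ha ha2
        rw [hφ1 b hb] at hab
        have h1 : φ a ∈ K := hab ▸ (eK ⟨b.val, hb⟩).2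
        exact (fact_kept _ h1).2 (fact_pend _ haD)
    · by_cases ha2 : a.val = K.card <;> by_cases hb2 : b.val = K.card
      · exact Fin.ext (ha2.trans hb2.symm)
      · exfalso
        rw [hφ2 a ha2] at hab
        exact hxD (hab ▸ hφ3 b hb hb2)
      · exfalso
        rw [hφ2 b hb2] at hab
        exact hxD (hab.symm ▸ hφ3 a ha ha2)
      · have hpa : a.val - (K.card + 1) < D.card := by have := a.isLt; omega
        have hpb : b.val - (K.card + 1) < D.card := by have := b.isLt; omega
        rw [hφ3' a ha ha2 hpa, hφ3' b hb hb2 hpb] at hab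
        have h1 := eD.injective (Subtype.ext hab)
        have h2 : a.val - (K.card + 1) = b.val - (K.card + 1) := congrArg Fin.val h1
        have h3 : a.val = b.val := by omega
        exact Fin.ext h3
  set Q : BipPoset K.card :=
    ⟨fun i j => P.lt (eK i) (eK j),
     fun i h => P.irrefl _ h,
     fun a b c h1 h2 => absurd ⟨h1, h2⟩ (P.height_le_one _ _ _),
     fun a b c => P.height_le_one _ _ _⟩ with hQ
  have c1 : ∀ j : Fin K.card, P.lt x (eK j) ↔ HeightOne Q j := by
    intro j
    constructor
    · intro h
      have hkept := fact_kept _ (eK j).2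
      have hex : ∃ u, P.lt u (eK j) ∧ u ≠ x := by
        by_contra hcon
        push_neg at hcon
        exact hkept.2 ⟨h, fun u hu => hcon u hu⟩
      obtain ⟨u, hu, hux⟩ := hex
      have huK : u ∈ K := by
        rw [hK, mem_keptSet]
        refine ⟨hux, ?_⟩
        rintro ⟨hxu, -⟩
        exact P.height_le_one x u (eK j) ⟨hxu, hu⟩
      refine ⟨eK.symm ⟨u, huK⟩, ?_⟩
      show P.lt ((eK (eK.symm ⟨u, huK⟩) : {c // c ∈ K}) : Fin n) (eK j)
      rw [Equiv.apply_symm_apply]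
      exact hu
    · rintro ⟨u, hu⟩
      exact hx.2 _ ⟨eK u, hu⟩
  refine ⟨K.card, by omega, Q,
    Equiv.ofBijective φ (Finite.injective_iff_bijective.mp hinj), ?_⟩
  intro a b
  show extLt Q a b ↔ P.lt (φ a) (φ b)
  rcases lt_trichotomy a.val K.card with ha | ha | ha
  · rcases lt_trichotomy b.val K.card with hb | hb | hb
    · rw [hφ1 a ha, hφ1 b hb, extLt_low Q ha hb]
    · rw [hφ1 a ha, hφ2 b hb]
      constructor
      · rintro (⟨-, hb', -⟩ | ⟨ha', -⟩) <;> omega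
      · intro h; exact absurd h (hx.1 _)
    · have hbD := hφ3 b (by omega) (by omega)
      rw [hφ1 a ha]
      constructor
      · rintro (⟨-, hb', -⟩ | ⟨ha', -⟩) <;> omega
      · intro h
        exfalso
        have hpend := fact_pend _ hbD
        exact (fact_kept _ (eK ⟨a.val, ha⟩).2).1 (hpend.2 _ h)
  · rw [hφ2 a ha]
    rcases lt_trichotomy b.val K.card with hb | hb | hb
    · rw [hφ1 b hb, c1 ⟨b.val, hb⟩]
      constructor
      · rintro (⟨ha', -, -⟩ | ⟨-, hb' | ⟨hb'', hone⟩⟩)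
        · omega
        · omega
        · exact hone
      · intro hone
        exact Or.inr ⟨ha, Or.inr ⟨hb, hone⟩⟩
    · rw [hφ2 b hb]
      constructor
      · rintro (⟨ha', -, -⟩ | ⟨-, hb' | ⟨hb'', -⟩⟩) <;> omega
      · intro h; exact absurd h (P.irrefl x)
    · have hbD := hφ3 b (by omega) (by omega)
      constructor
      · intro _; exact (fact_pend _ hbD).1
      · intro _; exact Or.inr ⟨ha, Or.inl hb⟩
  · have haD := hφ3 a (by omega) (by omega)
    constructor
    · rintro (⟨ha', -, -⟩ | ⟨ha', -⟩) <;> omega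
    · intro h
      exfalso
      exact P.height_le_one x (φ a) (φ b) ⟨(fact_pend _ haD).1, h⟩

lemma ext_inv {t s : ℕ} (ht : t < n) (hs : s < n) (Q : BipPoset t) (R : BipPoset s)
    (E : Equiv.Perm (Fin n)) (hE : ∀ a b, (ext n t Q).lt a b ↔ (ext n s R).lt (E a) (E b)) :
    ∃ e : Fin t ≃ Fin s, ∀ a b, Q.lt a b ↔ R.lt (e a) (e b) := by
  classical
  have hxQ : FullSupport (ext n t Q) ⟨t, ht⟩ := fullSupport_ext ht Q
  have hxR : FullSupport (ext n s R) ⟨s, hs⟩ := fullSupport_ext hs R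
  have hxR' : FullSupport (ext n s R) (E ⟨t, ht⟩) := fullSupport_congr E hE hxQ
  have hts : t = s := by
    have h1 : (keptSet (ext n t Q) ⟨t, ht⟩).card = (keptSet (ext n s R) (E ⟨t, ht⟩)).card := by
      rw [keptSet_congr E hE, Finset.card_image_of_injective _ E.injective]
    rw [keptSet_ext_card ht Q, keptSet_card_fullSupport _ hxR' hxR, keptSet_ext_card hs R] at h1
    exact h1
  subst hts
  obtain ⟨E', hE'rel, hE'x⟩ : ∃ E' : Equiv.Perm (Fin n),
      (∀ a b, (ext n t Q).lt a b ↔ (ext n t R).lt (E' a) (E' b)) ∧ E' ⟨t, ht⟩ = ⟨t, ht⟩ := by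
    refine ⟨E.trans (Equiv.swap (E ⟨t, ht⟩) ⟨t, hs⟩), fun a b => ?_, ?_⟩
    · rw [hE a b]
      exact swap_auto (ext n t R) hxR' hxR (E a) (E b)
    · show Equiv.swap (E ⟨t, ht⟩) ⟨t, hs⟩ (E ⟨t, ht⟩) = ⟨t, ht⟩
      rw [Equiv.swap_apply_left]
  have hkept : ∀ i : Fin t, (E' ⟨i.val, i.isLt.trans ht⟩).val < t := by
    intro i
    have h1 : (⟨i.val, i.isLt.trans ht⟩ : Fin n) ∈ keptSet (ext n t Q) ⟨t, ht⟩ := by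
      rw [keptSet_ext ht Q]
      simp [i.isLt]
    have h2 : E' ⟨i.val, i.isLt.trans ht⟩ ∈ keptSet (ext n t R) (E' ⟨t, ht⟩) := by
      rw [keptSet_congr E' hE'rel]
      exact Finset.mem_image_of_mem _ h1
    rw [hE'x, keptSet_ext ht R] at h2
    simpa using h2
  set e0 : Fin t → Fin t := fun i => ⟨(E' ⟨i.val, i.isLt.trans ht⟩).val, hkept i⟩ with he0
  have he0inj : Function.Injective e0 := by
    intro i j hij
    have h0 : (e0 i).val = (e0 j).val := congrArg Fin.val hij
    have h1 : (E' ⟨i.val, i.isLt.trans ht⟩).val = (E' ⟨j.val, j.isLt.trans ht⟩).val := h0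
    have h2 := E'.injective (Fin.ext h1)
    have h3 : i.val = j.val := by simpa using h2
    exact Fin.ext h3
  refine ⟨Equiv.ofBijective e0 (Finite.injective_iff_bijective.mp he0inj), ?_⟩
  intro a b
  show Q.lt a b ↔ R.lt (e0 a) (e0 b)
  have h1 : (ext n t Q).lt ⟨a.val, a.isLt.trans ht⟩ ⟨b.val, b.isLt.trans ht⟩ ↔ Q.lt a b :=
    extLt_low Q a.isLt b.isLt
  have h2 : (ext n t R).lt (E' ⟨a.val, a.isLt.trans ht⟩) (E' ⟨b.val, b.isLt.trans ht⟩) ↔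
      R.lt (e0 a) (e0 b) := extLt_low R (hkept a) (hkept b)
  exact h1.symm.trans ((hE'rel _ _).trans h2)

lemma uRel_equivalence (n : ℕ) : Equivalence (UBipPosetRel n) := by
  constructor
  · intro P; exact ⟨Equiv.refl _, fun a b => Iff.rfl⟩
  · rintro P Q ⟨e, he⟩
    refine ⟨e.symm, fun a b => ?_⟩
    rw [he (e.symm a) (e.symm b), Equiv.apply_symm_apply, Equiv.apply_symm_apply]
  · rintro P Q R ⟨e, he⟩ ⟨f, hf⟩
    exact ⟨e.trans f, fun a b => (he a b).trans (hf (e a) (e b))⟩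

end PosetCompilation

open PosetCompilation in
/-- Compilation theorem for bipartite posets: there is a bijection between
isomorphism classes of bipartite posets on `n` points containing a full support
point and isomorphism classes of bipartite posets on at most `n − 1` points. -/
theorem poset_compilation (n : ℕ) :
    Nonempty (Quot (UBipPosetRel n) ≃ Quot (SmallBipPosetRel n)) := by
  classical
  let F : (Σ t : Fin n, BipPoset t.val) → {P : BipPoset n // ∃ x, FullSupport P x} :=
    fun p => ⟨ext n p.1.val p.2, ⟨⟨p.1.val, p.1.isLt⟩, fullSupport_ext p.1.isLt p.2⟩⟩
  let f : Quot (SmallBipPosetRel n) → Quot (UBipPosetRel n) :=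
    Quot.lift (fun p => Quot.mk _ (F p)) (by
      rintro ⟨⟨t, ht⟩, Q⟩ ⟨⟨s, hs⟩, R⟩ ⟨e, he⟩
      exact Quot.sound (ext_congr ht hs Q R e he))
  have hsurj : Function.Surjective f := by
    refine Quot.ind ?_
    rintro ⟨P, hP⟩
    have hP' := hP
    obtain ⟨x, hx⟩ := hP'
    obtain ⟨t, ht, Q, E, hE⟩ := extraction P x hx
    exact ⟨Quot.mk _ ⟨⟨t, ht⟩, Q⟩, Quot.sound ⟨E, hE⟩⟩
  have hinj : Function.Injective f := by
    intro u v h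
    obtain ⟨p, rfl⟩ := Quot.exists_rep u
    obtain ⟨q, rfl⟩ := Quot.exists_rep v
    obtain ⟨⟨t, ht⟩, Q⟩ := p
    obtain ⟨⟨s, hs⟩, R⟩ := q
    have h2 : Relation.EqvGen (UBipPosetRel n) (F ⟨⟨t, ht⟩, Q⟩) (F ⟨⟨s, hs⟩, R⟩) :=
      Quot.eq.mp h
    obtain ⟨E, hE⟩ := ((uRel_equivalence n).eqvGen_iff).mp h2
    exact Quot.sound (ext_inv ht hs Q R E hE)
  exact ⟨(Equiv.ofBijective f ⟨hinj, hsurj⟩).symm⟩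
end

section
/- There is a bijection between (isomorphism classes of) minimal set covers of an n-element set and (isomorphism classes of) bipartite posets on n elements, obtained by choosing one loyal element from each cover set as a height-0 element, with x ≺ y iff x is a chosen loyal element, y is not, and x, y lie in a common set of the cover. Moreover, under this bijection, C contains a set of size |V| − |C| + 1 if and only if the corresponding poset contains a full support point. -/
/-- `C` is a set cover of the finite type `V`: the union of its members is all of `V`. -/
def IsSetCover {V : Type*} [Fintype V] (C : Finset (Finset V)) : Prop :=
  ∀ v : V, ∃ A ∈ C, v ∈ A

/-- A set cover is minimal if no member is contained in the union of the remaining members. -/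
def IsMinimalCover {V : Type*} [DecidableEq V] (C : Finset (Finset V)) : Prop :=
  ∀ A ∈ C, ¬ A ⊆ (C.erase A).sup id

/-- A vertex is loyal if it belongs to exactly one member of `C`. -/
def Loyal {V : Type*} (C : Finset (Finset V)) (v : V) : Prop :=
  ∃! A : Finset V, A ∈ C ∧ v ∈ A

/-- Isomorphism of minimal set covers on `Fin n`. -/
def CoverIsoRel (n : ℕ)
    (C D : {C : Finset (Finset (Fin n)) // IsSetCover C ∧ IsMinimalCover C}) : Prop :=
  ∃ σ : Equiv.Perm (Fin n), C.1.image (fun A => A.image σ) = D.1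

open scoped Classical

namespace CPaux

variable {n : ℕ} {C : Finset (Finset (Fin n))} {S S' : Finset (Fin n)}

/-- `S` is a loyal transversal of `C`. -/
def IsTrans (C : Finset (Finset (Fin n))) (S : Finset (Fin n)) : Prop :=
  (∀ s ∈ S, Loyal C s) ∧ ∀ A ∈ C, ∃! s, s ∈ S ∧ s ∈ A

lemma container_unique (hT : IsTrans C S) {s : Fin n} {A B : Finset (Fin n)} (hs : s ∈ S)
    (hA : A ∈ C) (hsA : s ∈ A) (hB : B ∈ C) (hsB : s ∈ B) : A = B := by
  obtain ⟨X, -, hX⟩ := hT.1 s hs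
  rw [hX A ⟨hA, hsA⟩, hX B ⟨hB, hsB⟩]

lemma trans_unique (hT : IsTrans C S) {A : Finset (Fin n)} {s t : Fin n} (hA : A ∈ C)
    (hs : s ∈ S) (hsA : s ∈ A) (ht : t ∈ S) (htA : t ∈ A) : s = t := by
  obtain ⟨x, -, hx⟩ := hT.2 A hA
  rw [hx s ⟨hs, hsA⟩, hx t ⟨ht, htA⟩]

/-- The bipartite poset attached to a cover and a chosen set `S`. -/
def mkP (C : Finset (Finset (Fin n))) (S : Finset (Fin n)) : BipPoset n where
  lt x y := x ∈ S ∧ y ∉ S ∧ ∃ A ∈ C, x ∈ A ∧ y ∈ A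
  irrefl a h := h.2.1 h.1
  trans _ _ _ hab hbc := absurd hbc.1 hab.2.1
  height_le_one _ _ _ h := h.1.2.1 h.2.1

lemma mkP_lt {x y : Fin n} :
    (mkP C S).lt x y ↔ x ∈ S ∧ y ∉ S ∧ ∃ A ∈ C, x ∈ A ∧ y ∈ A := Iff.rfl

lemma h0_iff (hC : IsSetCover C) (hT : IsTrans C S) (x : Fin n) :
    (∀ u, ¬ (mkP C S).lt u x) ↔ x ∈ S := by
  constructor
  · intro h
    by_contra hx
    obtain ⟨A, hA, hxA⟩ := hC x
    obtain ⟨s, ⟨hsS, hsA⟩, -⟩ := hT.2 A hA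
    exact h s ⟨hsS, hx, A, hA, hsA, hxA⟩
  · intro hx u hu; exact hu.2.1 hx

lemma h1_iff (hC : IsSetCover C) (hT : IsTrans C S) (y : Fin n) :
    (∃ u, (mkP C S).lt u y) ↔ y ∉ S := by
  constructor
  · rintro ⟨u, hu⟩; exact hu.2.1
  · intro hy
    obtain ⟨A, hA, hyA⟩ := hC y
    obtain ⟨s, ⟨hsS, hsA⟩, -⟩ := hT.2 A hA
    exact ⟨s, hsS, hy, A, hA, hsA, hyA⟩

noncomputable def tEl (C : Finset (Finset (Fin n))) (A : Finset (Fin n)) : Finset (Fin n) :=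
  if h : ∃ a, a ∈ A ∧ ∀ B ∈ C, a ∈ B → B = A then {h.choose} else ∅

noncomputable def tset (C : Finset (Finset (Fin n))) : Finset (Fin n) := C.sup (tEl C)

lemma exists_loyal (hM : IsMinimalCover C) {A : Finset (Fin n)} (hA : A ∈ C) :
    ∃ a, a ∈ A ∧ ∀ B ∈ C, a ∈ B → B = A := by
  have h := hM A hA
  rw [Finset.subset_iff] at h
  push_neg at h
  obtain ⟨a, haA, ha⟩ := h
  refine ⟨a, haA, fun B hB haB => ?_⟩
  by_contra hne
  exact ha (Finset.mem_sup.2 ⟨B, Finset.mem_erase.2 ⟨hne, hB⟩, haB⟩)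

lemma mem_tset {s : Fin n} : s ∈ tset C ↔ ∃ A ∈ C, s ∈ tEl C A := Finset.mem_sup

lemma tset_isTrans (hM : IsMinimalCover C) : IsTrans C (tset C) := by
  constructor
  · intro s hs
    rw [mem_tset] at hs
    obtain ⟨A, hA, hsA⟩ := hs
    simp only [tEl] at hsA
    split_ifs at hsA with h
    · rw [Finset.mem_singleton] at hsA; subst hsA
      exact ⟨A, ⟨hA, h.choose_spec.1⟩, fun B hB => h.choose_spec.2 B hB.1 hB.2⟩
    · exact absurd hsA (Finset.notMem_empty s)
  · intro A hA
    have h := exists_loyal hM hA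
    have hmem : h.choose ∈ tset C := by
      refine mem_tset.2 ⟨A, hA, ?_⟩
      simp only [tEl, dif_pos h]
      exact Finset.mem_singleton_self _
    refine ⟨h.choose, ⟨hmem, h.choose_spec.1⟩, ?_⟩
    rintro t ⟨htT, htA⟩
    rw [mem_tset] at htT
    obtain ⟨B, hB, htB⟩ := htT
    simp only [tEl] at htB
    split_ifs at htB with h'
    · rw [Finset.mem_singleton] at htB; subst htB
      have hBA : A = B := h'.choose_spec.2 A hA htA
      subst hBA
      rfl
    · exact absurd htB (Finset.notMem_empty t)

/-- The member of the reconstructed cover attached to a height-0 element. -/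
noncomputable def Gs (P : BipPoset n) (x : Fin n) : Finset (Fin n) :=
  insert x (Finset.univ.filter fun y => P.lt x y)

noncomputable def H0 (P : BipPoset n) : Finset (Fin n) :=
  Finset.univ.filter fun x => ∀ u, ¬ P.lt u x

noncomputable def Gcover (P : BipPoset n) : Finset (Finset (Fin n)) :=
  (H0 P).image (Gs P)

lemma mem_Gs {P : BipPoset n} {x y : Fin n} : y ∈ Gs P x ↔ y = x ∨ P.lt x y := by
  simp [Gs]

lemma mem_H0 {P : BipPoset n} {x : Fin n} : x ∈ H0 P ↔ ∀ u, ¬ P.lt u x := by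
  simp [H0]

lemma mem_Gcover {P : BipPoset n} {A : Finset (Fin n)} :
    A ∈ Gcover P ↔ ∃ x, x ∈ H0 P ∧ Gs P x = A := by
  simp [Gcover]

lemma below_h0 {P : BipPoset n} {u v : Fin n} (h : P.lt u v) : ∀ w, ¬ P.lt w u :=
  fun w hw => P.height_le_one w u v ⟨hw, h⟩

lemma Gcover_isCover (P : BipPoset n) : IsSetCover (Gcover P) := by
  intro v
  by_cases h : ∀ u, ¬ P.lt u v
  · exact ⟨Gs P v, mem_Gcover.2 ⟨v, mem_H0.2 h, rfl⟩, mem_Gs.2 (Or.inl rfl)⟩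
  · push_neg at h
    obtain ⟨u, hu⟩ := h
    exact ⟨Gs P u, mem_Gcover.2 ⟨u, mem_H0.2 (below_h0 hu), rfl⟩, mem_Gs.2 (Or.inr hu)⟩

lemma Gcover_isMin (P : BipPoset n) : IsMinimalCover (Gcover P) := by
  intro A hA hsub
  obtain ⟨x, hx, rfl⟩ := mem_Gcover.1 hA
  have hxmem : x ∈ ((Gcover P).erase (Gs P x)).sup id := hsub (mem_Gs.2 (Or.inl rfl))
  obtain ⟨B, hB, hxB⟩ := Finset.mem_sup.1 hxmem
  obtain ⟨hBne, hBmem⟩ := Finset.mem_erase.1 hB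
  obtain ⟨y, hy, rfl⟩ := mem_Gcover.1 hBmem
  rcases mem_Gs.1 hxB with h | h
  · exact hBne (by rw [h])
  · exact mem_H0.1 hx y h

lemma H0_isTrans (P : BipPoset n) : IsTrans (Gcover P) (H0 P) := by
  constructor
  · intro s hs
    refine ⟨Gs P s, ⟨mem_Gcover.2 ⟨s, hs, rfl⟩, mem_Gs.2 (Or.inl rfl)⟩, ?_⟩
    rintro B ⟨hB, hsB⟩
    obtain ⟨y, hy, rfl⟩ := mem_Gcover.1 hB
    rcases mem_Gs.1 hsB with h | h
    · rw [h]
    · exact absurd h (mem_H0.1 hs y)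
  · intro A hA
    obtain ⟨x, hx, rfl⟩ := mem_Gcover.1 hA
    refine ⟨x, ⟨hx, mem_Gs.2 (Or.inl rfl)⟩, ?_⟩
    rintro t ⟨htH, htA⟩
    rcases mem_Gs.1 htA with h | h
    · exact h
    · exact absurd h (mem_H0.1 htH x)

lemma mkP_Gcover_lt (P : BipPoset n) (u v : Fin n) :
    (mkP (Gcover P) (H0 P)).lt u v ↔ P.lt u v := by
  constructor
  · rintro ⟨hu, hv, A, hA, huA, hvA⟩
    obtain ⟨x, hx, rfl⟩ := mem_Gcover.1 hA
    rcases mem_Gs.1 huA with h | h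
    · subst h
      rcases mem_Gs.1 hvA with h' | h'
      · exact absurd (h' ▸ hu) hv
      · exact h'
    · exact absurd h (mem_H0.1 hu x)
  · intro h
    refine ⟨mem_H0.2 (below_h0 h), fun hv => mem_H0.1 hv u h,
      Gs P u, mem_Gcover.2 ⟨u, mem_H0.2 (below_h0 h), rfl⟩,
      mem_Gs.2 (Or.inl rfl), mem_Gs.2 (Or.inr h)⟩

lemma Gs_mkP (hT : IsTrans C S) {s : Fin n} {B : Finset (Fin n)}
    (hsS : s ∈ S) (hB : B ∈ C) (hsB : s ∈ B) : Gs (mkP C S) s = B := by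
  ext y
  rw [mem_Gs, mkP_lt]
  constructor
  · rintro (rfl | ⟨-, hyS, A', hA', hsA', hyA'⟩)
    · exact hsB
    · rwa [container_unique hT hsS hA' hsA' hB hsB] at hyA'
  · intro hyB
    by_cases hyS : y ∈ S
    · left; exact trans_unique hT hB hyS hyB hsS hsB
    · right; exact ⟨hsS, hyS, B, hB, hsB, hyB⟩

lemma Gcover_mkP (hC : IsSetCover C) (hT : IsTrans C S) : Gcover (mkP C S) = C := by
  ext A
  rw [mem_Gcover]
  constructor
  · rintro ⟨x, hx, rfl⟩
    have hxS : x ∈ S := (h0_iff hC hT x).1 (mem_H0.1 hx)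
    obtain ⟨B, hB, hxB⟩ := hC x
    rw [Gs_mkP hT hxS hB hxB]; exact hB
  · intro hA
    obtain ⟨s, ⟨hsS, hsA⟩, -⟩ := hT.2 A hA
    exact ⟨s, mem_H0.2 ((h0_iff hC hT s).2 hsS), Gs_mkP hT hsS hA hsA⟩

noncomputable def swapf (C : Finset (Finset (Fin n))) (S S' : Finset (Fin n)) (v : Fin n) :
    Fin n :=
  if h : ∃ w, w ∈ S' ∧ ∃ A ∈ C, v ∈ A ∧ v ∈ S ∧ w ∈ A then h.choose
  else if h' : ∃ w, w ∈ S ∧ ∃ A ∈ C, v ∈ A ∧ v ∈ S' ∧ w ∈ A then h'.choose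
  else v

lemma swapf_spec₁ (hC : IsSetCover C) (hT' : IsTrans C S') {v : Fin n} (hv : v ∈ S) :
    swapf C S S' v ∈ S' ∧ ∃ A ∈ C, v ∈ A ∧ swapf C S S' v ∈ A := by
  obtain ⟨A, hA, hvA⟩ := hC v
  obtain ⟨w, ⟨hw, hwA⟩, -⟩ := hT'.2 A hA
  have h : ∃ w, w ∈ S' ∧ ∃ A ∈ C, v ∈ A ∧ v ∈ S ∧ w ∈ A := ⟨w, hw, A, hA, hvA, hv, hwA⟩
  rw [swapf, dif_pos h]
  obtain ⟨hw', A', hA', hvA', -, hwA'⟩ := h.choose_spec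
  exact ⟨hw', A', hA', hvA', hwA'⟩

lemma swapf_spec₂ (hC : IsSetCover C) (hT : IsTrans C S) {v : Fin n}
    (hv : v ∉ S) (hv' : v ∈ S') :
    swapf C S S' v ∈ S ∧ ∃ A ∈ C, v ∈ A ∧ swapf C S S' v ∈ A := by
  have hneg : ¬ ∃ w, w ∈ S' ∧ ∃ A ∈ C, v ∈ A ∧ v ∈ S ∧ w ∈ A := by
    rintro ⟨w, -, A, -, -, hvS, -⟩; exact hv hvS
  obtain ⟨A, hA, hvA⟩ := hC v
  obtain ⟨w, ⟨hw, hwA⟩, -⟩ := hT.2 A hA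
  have h' : ∃ w, w ∈ S ∧ ∃ A ∈ C, v ∈ A ∧ v ∈ S' ∧ w ∈ A := ⟨w, hw, A, hA, hvA, hv', hwA⟩
  rw [swapf, dif_neg hneg, dif_pos h']
  obtain ⟨hw', A', hA', hvA', -, hwA'⟩ := h'.choose_spec
  exact ⟨hw', A', hA', hvA', hwA'⟩

lemma swapf_none {v : Fin n} (hv : v ∉ S) (hv' : v ∉ S') : swapf C S S' v = v := by
  rw [swapf, dif_neg (by rintro ⟨w, -, A, -, -, hvS, -⟩; exact hv hvS),
    dif_neg (by rintro ⟨w, -, A, -, -, hvS, -⟩; exact hv' hvS)]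

lemma swapf_eq₁ (hC : IsSetCover C) (hT : IsTrans C S) (hT' : IsTrans C S')
    {v w : Fin n} (hv : v ∈ S) (hw : w ∈ S') {A : Finset (Fin n)}
    (hA : A ∈ C) (hvA : v ∈ A) (hwA : w ∈ A) : swapf C S S' v = w := by
  obtain ⟨h1, B, hB, hvB, hfB⟩ := swapf_spec₁ hC hT' hv
  have hBA : B = A := container_unique hT hv hB hvB hA hvA
  subst hBA
  exact trans_unique hT' hB h1 hfB hw hwA

lemma swapf_eq₂ (hC : IsSetCover C) (hT : IsTrans C S) (hT' : IsTrans C S')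
    {v w : Fin n} (hv : v ∉ S) (hv' : v ∈ S') (hw : w ∈ S) {A : Finset (Fin n)}
    (hA : A ∈ C) (hvA : v ∈ A) (hwA : w ∈ A) : swapf C S S' v = w := by
  obtain ⟨h1, B, hB, hvB, hfB⟩ := swapf_spec₂ hC hT hv hv'
  have hBA : B = A := container_unique hT' hv' hB hvB hA hvA
  subst hBA
  exact trans_unique hT hB h1 hfB hw hwA

lemma swapf_invol (hC : IsSetCover C) (hT : IsTrans C S) (hT' : IsTrans C S') (v : Fin n) :
    swapf C S' S (swapf C S S' v) = v := by
  by_cases hv : v ∈ S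
  · obtain ⟨h1, A, hA, hvA, hfA⟩ := swapf_spec₁ hC hT' hv
    exact swapf_eq₁ hC hT' hT h1 hv hA hfA hvA
  · by_cases hv' : v ∈ S'
    · obtain ⟨h1, A, hA, hvA, hfA⟩ := swapf_spec₂ hC hT hv hv'
      by_cases hf : swapf C S S' v ∈ S'
      · have heq : swapf C S S' v = v := trans_unique hT' hA hf hfA hv' hvA
        rw [heq] at h1
        exact absurd h1 hv
      · exact swapf_eq₂ hC hT' hT hf h1 hv' hA hfA hvA
    · rw [swapf_none hv hv', swapf_none hv' hv]

lemma swapf_rel (hC : IsSetCover C) (hT : IsTrans C S) (hT' : IsTrans C S') {u v : Fin n}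
    (h : (mkP C S).lt u v) : (mkP C S').lt (swapf C S S' u) (swapf C S S' v) := by
  obtain ⟨hu, hv, B, hB, huB, hvB⟩ := h
  obtain ⟨h1, B₂, hB₂, huB₂, hfB₂⟩ := swapf_spec₁ hC hT' hu
  have hfB : swapf C S S' u ∈ B := container_unique hT hu hB₂ huB₂ hB huB ▸ hfB₂
  by_cases hv' : v ∈ S'
  · obtain ⟨h2, B₃, hB₃, hvB₃, hgB₃⟩ := swapf_spec₂ hC hT hv hv'
    have hgB : swapf C S S' v ∈ B := container_unique hT' hv' hB₃ hvB₃ hB hvB ▸ hgB₃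
    have hgu : swapf C S S' v = u := trans_unique hT hB h2 hgB hu huB
    rw [hgu]
    refine ⟨h1, ?_, B, hB, hfB, huB⟩
    intro huS'
    exact hv ((trans_unique hT' hB huS' huB hv' hvB) ▸ hu)
  · rw [swapf_none hv hv']
    exact ⟨h1, hv', B, hB, hfB, hvB⟩

lemma mkP_rel (hC : IsSetCover C) (hT : IsTrans C S) (hT' : IsTrans C S') :
    BipPosetRel n (mkP C S) (mkP C S') := by
  refine ⟨⟨swapf C S S', swapf C S' S, swapf_invol hC hT hT', swapf_invol hC hT' hT⟩, ?_⟩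
  intro a b
  constructor
  · exact swapf_rel hC hT hT'
  · intro h
    have h2 := swapf_rel hC hT' hT h
    rwa [show (⟨swapf C S S', swapf C S' S, swapf_invol hC hT hT',
        swapf_invol hC hT' hT⟩ : Equiv.Perm (Fin n)) a = swapf C S S' a from rfl,
      show (⟨swapf C S S', swapf C S' S, swapf_invol hC hT hT',
        swapf_invol hC hT' hT⟩ : Equiv.Perm (Fin n)) b = swapf C S S' b from rfl,
      swapf_invol hC hT hT', swapf_invol hC hT hT'] at h2

lemma rel_trans {P Q R : BipPoset n} (h1 : BipPosetRel n P Q) (h2 : BipPosetRel n Q R) :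
    BipPosetRel n P R := by
  obtain ⟨e, he⟩ := h1
  obtain ⟨f, hf⟩ := h2
  exact ⟨e.trans f, fun a b => (he a b).trans (hf (e a) (e b))⟩

lemma rel_of_iff {P Q : BipPoset n} (h : ∀ a b, P.lt a b ↔ Q.lt a b) : BipPosetRel n P Q :=
  ⟨Equiv.refl _, h⟩

lemma mem_image_perm {σ : Equiv.Perm (Fin n)} {S : Finset (Fin n)} {a : Fin n} :
    σ a ∈ S.image σ ↔ a ∈ S := by
  simp [Finset.mem_image, σ.injective.eq_iff]

lemma image_isTrans (σ : Equiv.Perm (Fin n)) (hT : IsTrans C S) :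
    IsTrans (C.image (fun A => A.image σ)) (S.image σ) := by
  constructor
  · intro s' hs'
    obtain ⟨s, hs, rfl⟩ := Finset.mem_image.1 hs'
    obtain ⟨A, ⟨hA, hsA⟩, hAu⟩ := hT.1 s hs
    refine ⟨A.image σ, ⟨Finset.mem_image_of_mem _ hA, Finset.mem_image_of_mem _ hsA⟩, ?_⟩
    rintro B ⟨hB, hsB⟩
    obtain ⟨A', hA', rfl⟩ := Finset.mem_image.1 hB
    rw [mem_image_perm] at hsB
    rw [hAu A' ⟨hA', hsB⟩]
  · intro B hB
    obtain ⟨A, hA, rfl⟩ := Finset.mem_image.1 hB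
    obtain ⟨s, ⟨hsS, hsA⟩, hsu⟩ := hT.2 A hA
    refine ⟨σ s, ⟨Finset.mem_image_of_mem _ hsS, Finset.mem_image_of_mem _ hsA⟩, ?_⟩
    rintro t ⟨htS, htA⟩
    obtain ⟨t', ht', rfl⟩ := Finset.mem_image.1 htS
    rw [mem_image_perm] at htA
    rw [hsu t' ⟨ht', htA⟩]

lemma mkP_image (σ : Equiv.Perm (Fin n)) (a b : Fin n) :
    (mkP C S).lt a b ↔
      (mkP (C.image (fun A => A.image σ)) (S.image σ)).lt (σ a) (σ b) := by
  rw [mkP_lt, mkP_lt, mem_image_perm, mem_image_perm]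
  refine and_congr_right fun _ => and_congr_right fun _ => ?_
  constructor
  · rintro ⟨A, hA, haA, hbA⟩
    exact ⟨A.image σ, Finset.mem_image_of_mem _ hA,
      Finset.mem_image_of_mem _ haA, Finset.mem_image_of_mem _ hbA⟩
  · rintro ⟨B, hB, haB, hbB⟩
    obtain ⟨A, hA, rfl⟩ := Finset.mem_image.1 hB
    rw [mem_image_perm] at haB hbB
    exact ⟨A, hA, haB, hbB⟩

/-- The packaged map from covers to bipartite posets. -/
noncomputable def F (C : {C : Finset (Finset (Fin n)) // IsSetCover C ∧ IsMinimalCover C}) :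
    BipPoset n :=
  mkP C.1 (tset C.1)

noncomputable def GPack (P : BipPoset n) :
    {C : Finset (Finset (Fin n)) // IsSetCover C ∧ IsMinimalCover C} :=
  ⟨Gcover P, Gcover_isCover P, Gcover_isMin P⟩

lemma F_respect (C D : {C : Finset (Finset (Fin n)) // IsSetCover C ∧ IsMinimalCover C})
    (h : CoverIsoRel n C D) : BipPosetRel n (F C) (F D) := by
  obtain ⟨σ, hσ⟩ := h
  have hT : IsTrans C.1 (tset C.1) := tset_isTrans C.2.2
  have hT' : IsTrans D.1 ((tset C.1).image σ) := by
    rw [← hσ]; exact image_isTrans σ hT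
  refine rel_trans ⟨σ, fun a b => ?_⟩ (mkP_rel D.2.1 hT' (tset_isTrans D.2.2))
  have h2 := mkP_image (C := C.1) (S := tset C.1) σ a b
  rwa [hσ] at h2

lemma Gs_image {P Q : BipPoset n} {e : Equiv.Perm (Fin n)}
    (he : ∀ a b, P.lt a b ↔ Q.lt (e a) (e b)) (x : Fin n) :
    (Gs P x).image e = Gs Q (e x) := by
  ext z
  simp only [Finset.mem_image, mem_Gs]
  constructor
  · rintro ⟨y, (rfl | h'), rfl⟩
    · exact Or.inl rfl
    · exact Or.inr ((he x y).1 h')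
  · rintro (rfl | h')
    · exact ⟨x, Or.inl rfl, rfl⟩
    · refine ⟨e.symm z, Or.inr ?_, e.apply_symm_apply z⟩
      rw [he x (e.symm z), e.apply_symm_apply]
      exact h'

lemma H0_image {P Q : BipPoset n} {e : Equiv.Perm (Fin n)}
    (he : ∀ a b, P.lt a b ↔ Q.lt (e a) (e b)) (x : Fin n) :
    x ∈ H0 P ↔ e x ∈ H0 Q := by
  rw [mem_H0, mem_H0]
  constructor
  · intro h u hu
    refine h (e.symm u) ?_
    rw [he (e.symm u) x, e.apply_symm_apply]
    exact hu
  · intro h u hu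
    exact h (e u) ((he u x).1 hu)

lemma G_respect (P Q : BipPoset n) (h : BipPosetRel n P Q) :
    CoverIsoRel n (GPack P) (GPack Q) := by
  obtain ⟨e, he⟩ := h
  refine ⟨e, ?_⟩
  show (Gcover P).image (fun A => A.image e) = Gcover Q
  ext B
  simp only [Finset.mem_image, mem_Gcover]
  constructor
  · rintro ⟨A, ⟨x, hx, rfl⟩, rfl⟩
    exact ⟨e x, (H0_image he x).1 hx, (Gs_image he x).symm⟩
  · rintro ⟨y, hy, rfl⟩
    refine ⟨Gs P (e.symm y), ⟨e.symm y, ?_, rfl⟩, ?_⟩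
    · rw [H0_image he (e.symm y), e.apply_symm_apply]; exact hy
    · rw [Gs_image he (e.symm y), e.apply_symm_apply]

noncomputable def fwd : Quot (CoverIsoRel n) → Quot (BipPosetRel n) :=
  Quot.lift (fun C => Quot.mk _ (F C)) fun C D h => Quot.sound (F_respect C D h)

noncomputable def bwd : Quot (BipPosetRel n) → Quot (CoverIsoRel n) :=
  Quot.lift (fun P => Quot.mk _ (GPack P)) fun P Q h => Quot.sound (G_respect P Q h)

lemma fwd_bwd : ∀ x : Quot (BipPosetRel n), fwd (bwd x) = x := by
  refine Quot.ind fun P => ?_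
  refine Quot.sound (rel_trans (mkP_rel (Gcover_isCover P)
    (tset_isTrans (Gcover_isMin P)) (H0_isTrans P)) (rel_of_iff (mkP_Gcover_lt P)))

lemma bwd_fwd : ∀ x : Quot (CoverIsoRel n), bwd (fwd x) = x := by
  refine Quot.ind fun C => ?_
  have h : GPack (F C) = C := Subtype.ext (Gcover_mkP C.2.1 (tset_isTrans C.2.2))
  show Quot.mk _ (GPack (F C)) = Quot.mk _ C
  rw [h]

noncomputable def mainEquiv : Quot (CoverIsoRel n) ≃ Quot (BipPosetRel n) :=
  ⟨fwd, bwd, bwd_fwd, fwd_bwd⟩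

lemma card_trans (hT : IsTrans C S) : S.card = C.card := by
  refine Finset.card_bij (fun s hs => (hT.1 s hs).choose) ?_ ?_ ?_
  · intro s hs; exact (hT.1 s hs).choose_spec.1.1
  · intro s hs t ht h
    simp only [] at h
    have h1 := (hT.1 s hs).choose_spec.1
    have h2 := (hT.1 t ht).choose_spec.1
    rw [h] at h1
    exact trans_unique hT h2.1 hs h1.2 ht h2.2
  · intro A hA
    obtain ⟨s, ⟨hsS, hsA⟩, -⟩ := hT.2 A hA
    exact ⟨s, hsS, ((hT.1 s hsS).choose_spec.2 A ⟨hA, hsA⟩).symm⟩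

lemma moreover_aux (hC : IsSetCover C) (hT : IsTrans C S) :
    (∃ Y ∈ C, (Y.card : ℤ) = (n : ℤ) - C.card + 1) ↔
      ∃ x : Fin n, (∀ u, ¬ (mkP C S).lt u x) ∧
        ∀ y, (∃ u, (mkP C S).lt u y) → (mkP C S).lt x y := by
  have hcardS : S.card = C.card := card_trans hT
  have hSle : C.card ≤ n := by
    rw [← hcardS]
    simpa using Finset.card_le_univ S
  have hUcard : (Finset.univ \ S).card = n - C.card := by
    rw [Finset.card_sdiff_of_subset (Finset.subset_univ S), hcardS]
    simp
  constructor
  · rintro ⟨Y, hY, hYcard⟩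
    obtain ⟨s, ⟨hsS, hsY⟩, hsu⟩ := hT.2 Y hY
    have hYS : Y ∩ S = {s} := by
      ext t
      simp only [Finset.mem_inter, Finset.mem_singleton]
      exact ⟨fun ht => hsu t ⟨ht.2, ht.1⟩, fun ht => ht ▸ ⟨hsY, hsS⟩⟩
    have hcard1 := Finset.card_inter_add_card_sdiff Y S
    rw [hYS, Finset.card_singleton] at hcard1
    have hEq : Y \ S = Finset.univ \ S := by
      refine Finset.eq_of_subset_of_card_le
        (fun t ht => Finset.mem_sdiff.2 ⟨Finset.mem_univ t, (Finset.mem_sdiff.1 ht).2⟩) ?_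
      rw [hUcard]
      omega
    refine ⟨s, fun u hu => hu.2.1 hsS, fun y hy => ?_⟩
    obtain ⟨u, hu⟩ := hy
    have hyS : y ∉ S := hu.2.1
    have hyY : y ∈ Y := by
      have hmem : y ∈ Finset.univ \ S := Finset.mem_sdiff.2 ⟨Finset.mem_univ y, hyS⟩
      rw [← hEq] at hmem
      exact (Finset.mem_sdiff.1 hmem).1
    exact ⟨hsS, hyS, Y, hY, hsY, hyY⟩
  · rintro ⟨x, hx1, hx2⟩
    have hxS : x ∈ S := by
      by_contra hxS
      obtain ⟨A, hA, hxA⟩ := hC x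
      obtain ⟨t, ⟨htS, htA⟩, -⟩ := hT.2 A hA
      exact hx1 t ⟨htS, hxS, A, hA, htA, hxA⟩
    obtain ⟨A, ⟨hA, hxA⟩, hAu⟩ := hT.1 x hxS
    refine ⟨A, hA, ?_⟩
    have hEq : A \ S = Finset.univ \ S := by
      refine Finset.Subset.antisymm
        (fun t ht => Finset.mem_sdiff.2 ⟨Finset.mem_univ t, (Finset.mem_sdiff.1 ht).2⟩) ?_
      intro y hy
      have hyS : y ∉ S := (Finset.mem_sdiff.1 hy).2
      have hry : ∃ u, (mkP C S).lt u y := by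
        obtain ⟨B, hB, hyB⟩ := hC y
        obtain ⟨t, ⟨htS, htB⟩, -⟩ := hT.2 B hB
        exact ⟨t, htS, hyS, B, hB, htB, hyB⟩
      obtain ⟨-, -, B, hB, hxB, hyB⟩ := hx2 y hry
      exact Finset.mem_sdiff.2 ⟨hAu B ⟨hB, hxB⟩ ▸ hyB, hyS⟩
    have hAS : A ∩ S = {x} := by
      ext t
      simp only [Finset.mem_inter, Finset.mem_singleton]
      exact ⟨fun ht => trans_unique hT hA ht.2 ht.1 hxS hxA, fun ht => ht ▸ ⟨hxA, hxS⟩⟩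
    have hcard1 := Finset.card_inter_add_card_sdiff A S
    rw [hAS, Finset.card_singleton, hEq, hUcard] at hcard1
    omega

end CPaux

/-- There is a bijection between isomorphism classes of minimal set covers of an
`n`-set and isomorphism classes of bipartite posets on `n` elements; moreover, under
the construction (one loyal element `S`-chosen from each member of the cover placed
at height 0, with `x ≺ y` iff `x` is a chosen loyal element, `y` is not, and `x, y`
lie in a common member), the cover contains a member of size `|V| − |C| + 1` iff the
resulting poset contains a full support point. -/
theorem cover_poset_bijection (n : ℕ) :
    Nonempty (Quot (CoverIsoRel n) ≃ Quot (BipPosetRel n)) ∧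
    (∀ (C : Finset (Finset (Fin n))), IsSetCover C → IsMinimalCover C →
      ∀ S : Finset (Fin n), (∀ s ∈ S, Loyal C s) → (∀ A ∈ C, ∃! s, s ∈ S ∧ s ∈ A) →
      let r : Fin n → Fin n → Prop :=
        fun x y => x ∈ S ∧ y ∉ S ∧ ∃ A ∈ C, x ∈ A ∧ y ∈ A
      ((∃ Y ∈ C, (Y.card : ℤ) = (n : ℤ) - C.card + 1) ↔
        ∃ x : Fin n, (∀ u, ¬ r u x) ∧ ∀ y, (∃ u, r u y) → r x y)) := by
  
  constructor
  · exact ⟨CPaux.mainEquiv⟩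
  · intro C hC hM S hS1 hS2
    exact CPaux.moreover_aux hC ⟨hS1, hS2⟩
end

section
/- There is a bijection between (isomorphism classes of) XY-graphs on n vertices with no isolates in Y and (isomorphism classes of) minimal set covers of an n-element set, obtained by mapping each x ∈ X to the set {x} ∪ N(x); under this bijection, X contains a universal vertex if and only if the cover contains a set of size |V| − |C| + 1. -/
open SimpleGraph
attribute [local instance] Classical.propDecidable

/-- An XY-graph on `Fin n`: a bipartite graph with a specified bipartition, whose
distinguished part is `X` (the other part `Y` being the complement of `X`). -/
structure XYGraph (n : ℕ) where
  G : SimpleGraph (Fin n)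
  X : Finset (Fin n)
  bip : ∀ u v : Fin n, G.Adj u v → (u ∈ X ∧ v ∉ X) ∨ (u ∉ X ∧ v ∈ X)

/-- No vertex of `Y` (the complement of `X`) is isolated. -/
def NoIsolateY {n : ℕ} (A : XYGraph n) : Prop :=
  ∀ v : Fin n, v ∉ A.X → ∃ u ∈ A.X, A.G.Adj u v

/-- `X` contains a universal vertex: one adjacent to every vertex of `Y`. -/
def HasUniversalX {n : ℕ} (A : XYGraph n) : Prop :=
  ∃ x ∈ A.X, ∀ y : Fin n, y ∉ A.X → A.G.Adj x y

/-- Isomorphism of XY-graphs with no isolates in `Y`. -/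
def XYnRel (n : ℕ) (A B : {A : XYGraph n // NoIsolateY A}) : Prop :=
  ∃ e : A.1.G ≃g B.1.G, ∀ v : Fin n, v ∈ A.1.X ↔ e v ∈ B.1.X

/-!
For `x ∈ X` the set `{x} ∪ N(x)` meets `X` only in `x`, so `X` is a set of loyal representatives
of the cover, one in each member; a cover is minimal exactly when every member has a loyal
element. Conversely, given a minimal cover and one loyal representative per member, joining each
representative to the other elements of its member gives back the graph. Two choices of
representatives differ by an automorphism of the cover, namely the product of the transpositions
exchanging the two representatives of each member, so the inverse map is well defined on
isomorphism classes. Finally `|{x} ∪ N(x)| = 1 + deg x ≤ 1 + |Y| = |V| - |C| + 1`, with equality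
iff `x` is universal.
-/

open Finset

section Covers

variable {V : Type*} {C D : Finset (Finset V)} {X Y : Finset V}

theorem Loyal.mem_iff {v : V} (h : Loyal C v) {S T : Finset V} (hS : S ∈ C) (hvS : v ∈ S)
    (hT : T ∈ C) : v ∈ T ↔ T = S :=
  ⟨fun hvT => h.unique ⟨hT, hvT⟩ ⟨hS, hvS⟩, fun h => h ▸ hvS⟩

theorem isMinimalCover_iff_forall_exists_loyal [DecidableEq V] :
    IsMinimalCover C ↔ ∀ S ∈ C, ∃ v ∈ S, Loyal C v := by
  refine forall₂_congr fun S hS => ?_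
  simp only [not_subset, mem_sup, mem_erase, id]
  refine exists_congr fun v => and_congr_right fun hv =>
    ⟨fun h => ⟨S, ⟨hS, hv⟩, fun T hT => ?_⟩, ?_⟩
  · by_contra hne
    exact h ⟨T, ⟨hne, hT.1⟩, hT.2⟩
  · rintro h ⟨T, ⟨hne, hT⟩, hvT⟩
    exact hne ((h.mem_iff hS hv hT).1 hvT)

def IsLoyalTransversal (C : Finset (Finset V)) (X : Finset V) : Prop :=
  (∀ x ∈ X, Loyal C x) ∧ ∀ S ∈ C, ∃! x, x ∈ X ∧ x ∈ S

theorem IsLoyalTransversal.eq_of_mem (h : IsLoyalTransversal C X) {S : Finset V} (hS : S ∈ C)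
    {x y : V} (hx : x ∈ X) (hxS : x ∈ S) (hy : y ∈ X) (hyS : y ∈ S) : x = y :=
  (h.2 S hS).unique ⟨hx, hxS⟩ ⟨hy, hyS⟩

theorem IsLoyalTransversal.isMinimalCover [DecidableEq V] (h : IsLoyalTransversal C X) :
    IsMinimalCover C :=
  isMinimalCover_iff_forall_exists_loyal.2 fun S hS =>
    let ⟨x, ⟨hx, hxS⟩, _⟩ := h.2 S hS
    ⟨x, hxS, h.1 x hx⟩

theorem IsMinimalCover.exists_isLoyalTransversal [DecidableEq V] (hC : IsMinimalCover C) :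
    ∃ X, IsLoyalTransversal C X := by
  choose r hrS hr using fun S : C => isMinimalCover_iff_forall_exists_loyal.1 hC S S.2
  refine ⟨univ.image r, ?_, fun S hS => ⟨r ⟨S, hS⟩, ⟨mem_image_of_mem _ (mem_univ _), hrS _⟩, ?_⟩⟩
  · simp only [mem_image, mem_univ, true_and, forall_exists_index]
    rintro _ S rfl
    exact hr S
  · rintro _ ⟨hy, hyS⟩
    obtain ⟨T, -, rfl⟩ := mem_image.1 hy
    exact congrArg r (Subtype.ext (((hr T).mem_iff T.2 (hrS T) hS).1 hyS).symm)

theorem Loyal.image_perm [DecidableEq V] (σ : Equiv.Perm V) {v : V} (h : Loyal C v) :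
    Loyal (C.image (·.image σ)) (σ v) := by
  obtain ⟨S, ⟨hS, hvS⟩, huniq⟩ := h
  refine ⟨S.image σ, ⟨mem_image_of_mem _ hS, mem_image_of_mem _ hvS⟩, ?_⟩
  rintro _ ⟨hT', hvT⟩
  obtain ⟨T, hT, rfl⟩ := mem_image.1 hT'
  rw [huniq T ⟨hT, σ.injective.mem_finset_image.1 hvT⟩]

theorem IsLoyalTransversal.image_perm [DecidableEq V] (σ : Equiv.Perm V)
    (h : IsLoyalTransversal C X) : IsLoyalTransversal (C.image (·.image σ)) (X.image σ) := by
  refine ⟨forall_mem_image.2 fun x hx => (h.1 x hx).image_perm σ,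
    forall_mem_image.2 fun S hS => ?_⟩
  obtain ⟨x, ⟨hx, hxS⟩, -⟩ := h.2 S hS
  refine ⟨σ x, ⟨mem_image_of_mem _ hx, mem_image_of_mem _ hxS⟩, ?_⟩
  rintro _ ⟨hy', hyS⟩
  obtain ⟨y, hy, rfl⟩ := mem_image.1 hy'
  rw [h.eq_of_mem hS hy (σ.injective.mem_finset_image.1 hyS) hx hxS]

theorem Equiv.swap_fiberwise_involutive {ι : Type*} [DecidableEq V] (m : V → ι) (a b : ι → V)
    (ha : ∀ i, m (a i) = i) (hb : ∀ i, m (b i) = i) :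
    Function.Involutive fun v => Equiv.swap (a (m v)) (b (m v)) v := by
  intro v
  have hm : m (Equiv.swap (a (m v)) (b (m v)) v) = m v := by
    rw [Equiv.swap_apply_def]
    split_ifs
    · rw [hb]
    · rw [ha]
    · rfl
  dsimp only
  rw [hm, Equiv.swap_apply_self]

theorem IsLoyalTransversal.exists_perm [DecidableEq V] [Fintype V] (hC : IsSetCover C)
    (hX : IsLoyalTransversal C X) (hY : IsLoyalTransversal C Y) :
    ∃ τ : Equiv.Perm V, C.image (·.image τ) = C ∧ ∀ v, v ∈ X ↔ τ v ∈ Y := by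
  have hmember : ∀ v, ∃ S : C, v ∈ S.1 := fun v =>
    let ⟨S, hS, hv⟩ := hC v
    ⟨⟨S, hS⟩, hv⟩
  choose m hm using hmember
  choose a ha using fun S : C => (hX.2 S S.2).exists
  choose b hb using fun S : C => (hY.2 S S.2).exists
  have hma : ∀ S, m (a S) = S := fun S =>
    Subtype.ext (((hX.1 _ (ha S).1).mem_iff S.2 (ha S).2 (m (a S)).2).1 (hm _))
  have hmb : ∀ S, m (b S) = S := fun S =>
    Subtype.ext (((hY.1 _ (hb S).1).mem_iff S.2 (hb S).2 (m (b S)).2).1 (hm _))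
  -- `m v` is some member containing `v`, the only one if `v` is a representative; `τ` exchanges
  -- the two representatives of each member and fixes every other point.
  set τ := (Equiv.swap_fiberwise_involutive m a b hma hmb).toPerm
  have hτ : ∀ v, τ v = Equiv.swap (a (m v)) (b (m v)) v := fun v => rfl
  have hmem : ∀ v, ∀ S ∈ C, v ∈ S → τ v ∈ S := by
    intro v S hS hv
    rw [hτ, Equiv.swap_apply_def]
    split_ifs with h₁ h₂
    · rw [((hX.1 _ (ha _).1).mem_iff (m v).2 (ha _).2 hS).1 (h₁ ▸ hv)]
      exact (hb _).2
    · rw [((hY.1 _ (hb _).1).mem_iff (m v).2 (hb _).2 hS).1 (h₂ ▸ hv)]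
      exact (ha _).2
    · exact hv
  refine ⟨τ, ?_, fun v => ?_⟩
  · refine (image_congr fun S hS => ?_).trans image_id
    exact eq_of_subset_of_card_le (image_subset_iff.2 fun v => hmem v S hS)
      (card_image_of_injective _ τ.injective).ge
  · have hXv : v ∈ X → v = a (m v) := fun h => hX.eq_of_mem (m v).2 h (hm v) (ha _).1 (ha _).2
    have hYv : v ∈ Y → v = b (m v) := fun h => hY.eq_of_mem (m v).2 h (hm v) (hb _).1 (hb _).2
    rw [hτ, Equiv.swap_apply_def]
    split_ifs with h₁ h₂
    · exact iff_of_true (h₁ ▸ (ha _).1) (hb _).1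
    · refine iff_of_false (fun h => h₁ (hXv h)) fun h => h₁ ?_
      exact h₂.trans (hY.eq_of_mem (m v).2 (hb _).1 (hb _).2 h (ha _).2)
    · exact iff_of_false (fun h => h₁ (hXv h)) fun h => h₂ (hYv h)

theorem IsLoyalTransversal.exists_perm_of_image [DecidableEq V] [Fintype V] {σ : Equiv.Perm V}
    (hD : IsSetCover D) (hσ : C.image (·.image σ) = D) (hX : IsLoyalTransversal C X)
    (hY : IsLoyalTransversal D Y) :
    ∃ τ : Equiv.Perm V, C.image (·.image τ) = D ∧ ∀ v, v ∈ X ↔ τ v ∈ Y := by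
  subst hσ
  obtain ⟨ρ, hρ, hρY⟩ := (hX.image_perm σ).exists_perm hD hY
  refine ⟨σ.trans ρ, ?_, fun v => σ.injective.mem_finset_image.symm.trans (hρY (σ v))⟩
  rw [← hρ, image_image]
  exact image_congr fun S _ => by simp [image_image, Equiv.coe_trans]

end Covers

namespace XYGraph

variable {n : ℕ} {C D : Finset (Finset (Fin n))} {X Y : Finset (Fin n)}

noncomputable def closedNbhd (A : XYGraph n) (x : Fin n) : Finset (Fin n) :=
  insert x (univ.filter fun y => A.G.Adj x y)

noncomputable def cover (A : XYGraph n) : Finset (Finset (Fin n)) :=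
  A.X.image A.closedNbhd

theorem mem_closedNbhd {A : XYGraph n} {x y : Fin n} :
    y ∈ A.closedNbhd x ↔ y = x ∨ A.G.Adj x y := by
  simp [closedNbhd]

theorem notMem_X_of_adj {A : XYGraph n} {x y : Fin n} (hx : x ∈ A.X) (h : A.G.Adj x y) :
    y ∉ A.X :=
  (A.bip x y h).elim And.right fun h' => absurd hx h'.1

theorem eq_of_mem_closedNbhd {A : XYGraph n} {x y : Fin n} (hx : x ∈ A.X) (hy : y ∈ A.X)
    (h : y ∈ A.closedNbhd x) : y = x :=
  (mem_closedNbhd.1 h).resolve_right fun hxy => notMem_X_of_adj hx hxy hy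

theorem isLoyalTransversal_cover (A : XYGraph n) : IsLoyalTransversal A.cover A.X := by
  refine ⟨fun x hx => ⟨A.closedNbhd x, ⟨mem_image_of_mem _ hx, mem_insert_self _ _⟩, ?_⟩,
    forall_mem_image.2 fun x hx => ⟨x, ⟨hx, mem_insert_self _ _⟩, ?_⟩⟩
  · rintro _ ⟨hS, hxS⟩
    obtain ⟨y, hy, rfl⟩ := mem_image.1 hS
    rw [eq_of_mem_closedNbhd hy hx hxS]
  · exact fun y ⟨hy, hyx⟩ => eq_of_mem_closedNbhd hx hy hyx

theorem isSetCover_cover {A : XYGraph n} (hA : NoIsolateY A) : IsSetCover A.cover := by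
  intro v
  by_cases hv : v ∈ A.X
  · exact ⟨A.closedNbhd v, mem_image_of_mem _ hv, mem_insert_self _ _⟩
  · obtain ⟨x, hx, hxv⟩ := hA v hv
    exact ⟨A.closedNbhd x, mem_image_of_mem _ hx, mem_closedNbhd.2 (Or.inr hxv)⟩

theorem card_cover (A : XYGraph n) : A.cover.card = A.X.card :=
  card_image_of_injOn fun _ hx _ hy h =>
    eq_of_mem_closedNbhd (A := A) hy hx (h ▸ mem_insert_self _ _)

theorem forall_adj_iff_card_closedNbhd {A : XYGraph n} {x : Fin n} (hx : x ∈ A.X) :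
    (∀ y ∉ A.X, A.G.Adj x y) ↔ (A.closedNbhd x).card = A.Xᶜ.card + 1 := by
  have hsub : univ.filter (A.G.Adj x) ⊆ A.Xᶜ := fun y hy =>
    mem_compl.2 (notMem_X_of_adj hx (mem_filter.1 hy).2)
  rw [closedNbhd, card_insert_of_notMem (by simp), add_left_inj]
  constructor
  · intro h
    congr 1
    exact hsub.antisymm fun y hy => mem_filter.2 ⟨mem_univ _, h y (mem_compl.1 hy)⟩
  · intro h y hy
    have hfilter := eq_of_subset_of_card_le hsub h.ge
    exact (mem_filter.1 (hfilter ▸ mem_compl.2 hy)).2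

theorem hasUniversalX_iff (A : XYGraph n) :
    HasUniversalX A ↔ ∃ S ∈ A.cover, (S.card : ℤ) = n - A.cover.card + 1 := by
  have hcompl := card_add_card_compl A.X
  rw [Fintype.card_fin] at hcompl
  rw [HasUniversalX, card_cover, cover, exists_mem_image]
  refine exists_congr fun x => and_congr_right fun hx =>
    (forall_adj_iff_card_closedNbhd hx).trans ?_
  omega

theorem exists_mem_cover_iff_adj {A : XYGraph n} {x y : Fin n} (hx : x ∈ A.X) (hy : y ∉ A.X) :
    (∃ S ∈ A.cover, x ∈ S ∧ y ∈ S) ↔ A.G.Adj x y := by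
  refine ⟨?_, fun h => ⟨A.closedNbhd x, mem_image_of_mem _ hx, mem_insert_self _ _,
    mem_closedNbhd.2 (Or.inr h)⟩⟩
  rintro ⟨_, hS, hxS, hyS⟩
  obtain ⟨z, hz, rfl⟩ := mem_image.1 hS
  obtain rfl := eq_of_mem_closedNbhd hz hx hxS
  exact (mem_closedNbhd.1 hyS).resolve_left fun h => hy (h ▸ hx)

theorem cover_image_of_iso {A B : XYGraph n} (e : A.G ≃g B.G) (he : ∀ v, v ∈ A.X ↔ e v ∈ B.X) :
    A.cover.image (·.image e.toEquiv) = B.cover := by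
  have hX : A.X.image e.toEquiv = B.X := by
    ext y
    obtain ⟨x, rfl⟩ := e.surjective y
    simpa using he x
  have hN : ∀ x, (A.closedNbhd x).image e.toEquiv = B.closedNbhd (e x) := by
    intro x
    ext y
    obtain ⟨z, rfl⟩ := e.surjective y
    simp [mem_closedNbhd, e.map_adj_iff]
  rw [cover, cover, image_image, ← hX, image_image]
  exact image_congr fun x _ => hN x

def ofCover (C : Finset (Finset (Fin n))) (X : Finset (Fin n)) : XYGraph n where
  G :=
    { Adj u v := (∃ S ∈ C, u ∈ S ∧ v ∈ S) ∧ Xor (u ∈ X) (v ∈ X)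
      symm := ⟨fun _ _ ⟨⟨S, hS, hu, hv⟩, h⟩ => ⟨⟨S, hS, hv, hu⟩, h.symm⟩⟩
      loopless := ⟨fun _ h => (xor_self _).mp h.2⟩ }
  X := X
  bip _ _ h := h.2.imp_right And.symm

theorem ofCover_adj {u v : Fin n} :
    (ofCover C X).G.Adj u v ↔ (∃ S ∈ C, u ∈ S ∧ v ∈ S) ∧ Xor (u ∈ X) (v ∈ X) :=
  Iff.rfl

theorem noIsolateY_ofCover (hC : IsSetCover C) (hX : IsLoyalTransversal C X) :
    NoIsolateY (ofCover C X) := by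
  intro v hv
  obtain ⟨S, hS, hvS⟩ := hC v
  obtain ⟨x, ⟨hx, hxS⟩, -⟩ := hX.2 S hS
  exact ⟨x, hx, ⟨S, hS, hxS, hvS⟩, Or.inl ⟨hx, hv⟩⟩

theorem closedNbhd_ofCover (hX : IsLoyalTransversal C X) {x : Fin n} {S : Finset (Fin n)}
    (hx : x ∈ X) (hS : S ∈ C) (hxS : x ∈ S) : (ofCover C X).closedNbhd x = S := by
  ext y
  rw [mem_closedNbhd, ofCover_adj]
  constructor
  · rintro (rfl | ⟨⟨T, hT, hxT, hyT⟩, -⟩)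
    · exact hxS
    · rwa [((hX.1 x hx).mem_iff hS hxS hT).1 hxT] at hyT
  · intro hy
    refine or_iff_not_imp_left.2 fun hyx => ⟨⟨S, hS, hxS, hy⟩, Or.inl ⟨hx, fun hyX => ?_⟩⟩
    exact hyx (hX.eq_of_mem hS hyX hy hx hxS)

theorem cover_ofCover (hX : IsLoyalTransversal C X) : (ofCover C X).cover = C := by
  ext S
  refine ⟨fun hS => ?_, fun hS => ?_⟩
  · obtain ⟨x, hx, rfl⟩ := mem_image.1 hS
    obtain ⟨T, ⟨hT, hxT⟩, -⟩ := hX.1 x hx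
    rwa [closedNbhd_ofCover hX hx hT hxT]
  · obtain ⟨x, ⟨hx, hxS⟩, -⟩ := hX.2 S hS
    exact mem_image.2 ⟨x, hx, closedNbhd_ofCover hX hx hS hxS⟩

attribute [ext] XYGraph

theorem ofCover_cover (A : XYGraph n) : ofCover A.cover A.X = A := by
  have hshare_symm : ∀ u v, (∃ S ∈ A.cover, u ∈ S ∧ v ∈ S) → ∃ S ∈ A.cover, v ∈ S ∧ u ∈ S :=
    fun _ _ ⟨S, hS, hu, hv⟩ => ⟨S, hS, hv, hu⟩
  ext : 1
  · ext u v
    rw [ofCover_adj]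
    constructor
    · rintro ⟨hshare, ⟨hu, hv⟩ | ⟨hv, hu⟩⟩
      · exact (exists_mem_cover_iff_adj hu hv).1 hshare
      · exact ((exists_mem_cover_iff_adj hv hu).1 (hshare_symm u v hshare)).symm
    · intro h
      rcases A.bip u v h with ⟨hu, hv⟩ | ⟨hu, hv⟩
      · exact ⟨(exists_mem_cover_iff_adj hu hv).2 h, Or.inl ⟨hu, hv⟩⟩
      · exact ⟨hshare_symm v u ((exists_mem_cover_iff_adj hv hu).2 h.symm), Or.inr ⟨hv, hu⟩⟩
  · rfl

theorem xynRel_ofCover {σ : Equiv.Perm (Fin n)} (hD : IsSetCover D)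
    (hσ : C.image (·.image σ) = D) (hX : IsLoyalTransversal C X) (hY : IsLoyalTransversal D Y)
    (h₁ : NoIsolateY (ofCover C X)) (h₂ : NoIsolateY (ofCover D Y)) :
    XYnRel n ⟨ofCover C X, h₁⟩ ⟨ofCover D Y, h₂⟩ := by
  obtain ⟨τ, rfl, hτ⟩ := hX.exists_perm_of_image hD hσ hY
  refine ⟨⟨τ, fun {u v} => ?_⟩, hτ⟩
  simp only [ofCover_adj, exists_mem_image, τ.injective.mem_finset_image, ← hτ]

noncomputable def ofMinimalCover
    (C : {C : Finset (Finset (Fin n)) // IsSetCover C ∧ IsMinimalCover C}) :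
    {A : XYGraph n // NoIsolateY A} :=
  ⟨ofCover C.1 C.2.2.exists_isLoyalTransversal.choose,
    noIsolateY_ofCover C.2.1 C.2.2.exists_isLoyalTransversal.choose_spec⟩

variable (n) in
noncomputable def quotEquiv : Quot (XYnRel n) ≃ Quot (CoverIsoRel n) where
  toFun := Quot.lift
    (fun A => Quot.mk _
      ⟨A.1.cover, isSetCover_cover A.2, A.1.isLoyalTransversal_cover.isMinimalCover⟩)
    fun _ _ ⟨e, he⟩ => Quot.sound ⟨e.toEquiv, cover_image_of_iso e he⟩
  invFun := Quot.lift (fun C => Quot.mk _ (ofMinimalCover C)) fun C D ⟨_, hσ⟩ =>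
    Quot.sound <| xynRel_ofCover D.2.1 hσ C.2.2.exists_isLoyalTransversal.choose_spec
      D.2.2.exists_isLoyalTransversal.choose_spec _ _
  left_inv := Quot.ind fun ⟨A, hA⟩ => by
    set C : {C : Finset (Finset (Fin n)) // IsSetCover C ∧ IsMinimalCover C} :=
      ⟨A.cover, isSetCover_cover hA, A.isLoyalTransversal_cover.isMinimalCover⟩
    show Quot.mk _ (ofMinimalCover C) = Quot.mk _ ⟨A, hA⟩
    have hA' : NoIsolateY (ofCover A.cover A.X) := (ofCover_cover A).symm ▸ hA
    have h : XYnRel n (ofMinimalCover C) ⟨ofCover A.cover A.X, hA'⟩ :=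
      xynRel_ofCover (σ := 1) C.2.1 (by simp [C]) C.2.2.exists_isLoyalTransversal.choose_spec
        A.isLoyalTransversal_cover _ _
    rw [show (⟨_, hA'⟩ : {A // NoIsolateY A}) = ⟨A, hA⟩ from Subtype.ext (ofCover_cover A)] at h
    exact Quot.sound h
  right_inv := Quot.ind fun C =>
    congrArg (Quot.mk _) (Subtype.ext (cover_ofCover C.2.2.exists_isLoyalTransversal.choose_spec))

end XYGraph

/-- There is a bijection between isomorphism classes of XY-graphs on `n` vertices with
no isolates in `Y` and isomorphism classes of minimal set covers of an `n`-set,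
obtained by mapping each `x ∈ X` to `{x} ∪ N(x)`; under this construction, `X`
contains a universal vertex iff the cover contains a member of size `|V| − |C| + 1`. -/
theorem xy_cover_bijection (n : ℕ) :
    Nonempty (Quot (XYnRel n) ≃ Quot (CoverIsoRel n)) ∧
    (∀ A : XYGraph n, NoIsolateY A →
      let C : Finset (Finset (Fin n)) :=
        A.X.image fun x => insert x (Finset.univ.filter fun y => A.G.Adj x y)
      (IsSetCover C ∧ IsMinimalCover C) ∧
      (HasUniversalX A ↔ ∃ Y ∈ C, (Y.card : ℤ) = (n : ℤ) - C.card + 1)) :=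
  ⟨⟨XYGraph.quotEquiv n⟩, fun A hA =>
    ⟨⟨XYGraph.isSetCover_cover hA, A.isLoyalTransversal_cover.isMinimalCover⟩,
      A.hasUniversalX_iff⟩⟩
end
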